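/- Symmetry/shift identity: for all nonnegative integers n, m and all real x, y: Σ_{k=0}^{n} C(n,k) y^{n−k} 𝔙_{m+k}(x;λ;μ) = Σ_{k=0}^{m} C(m,k) (−y)^{m−k} 𝔙_{n+k}(x+y;λ;μ). -/

import Mathlib

open PowerSeries Finset

/-- `V n x` are the unified Apostol Bernoulli–Euler polynomials `𝔙_n(x;λ;μ)`:
`(2−μ+(μ/2)t) e^{xt} = (λ e^t + (1−μ)) · Σ 𝔙_n(x;λ;μ) t^n/n!` as formal power series over ℝ. -/
def IsUnifiedApostolBE (lam mu : ℝ) (V : ℕ → ℝ → ℝ) : Prop :=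
  ∀ x : ℝ,
    (PowerSeries.C lam * PowerSeries.exp ℝ + PowerSeries.C (1 - mu)) *
        PowerSeries.mk (fun n => V n x / n.factorial) =
      (PowerSeries.C (2 - mu) + PowerSeries.C (mu / 2) * PowerSeries.X) *
        PowerSeries.rescale x (PowerSeries.exp ℝ)

private lemma rec_lemma' (c : ℕ → ℝ) (z : ℝ) (p q : ℕ) :
    ∑ k ∈ range (p+2), ((p+1).choose k : ℝ) * z^(p+1-k) * c (q+k)
    = z * ∑ k ∈ range (p+1), (p.choose k : ℝ) * z^(p-k) * c (q+k)
      + ∑ k ∈ range (p+1), (p.choose k : ℝ) * z^(p-k) * c (q+1+k) := by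
  have h1 : ∀ i ∈ range (p+1), ((p+1).choose (i+1) : ℝ) * z^(p+1-(i+1)) * c (q+(i+1))
      = (p.choose i : ℝ) * z^(p-i) * c (q+1+i) + (p.choose (i+1) : ℝ) * z^(p-i) * c (q+1+i) := by
    intro i hi
    have hq : q + 1 + i = q + (i + 1) := by omega
    rw [Nat.choose_succ_succ, hq]
    push_cast
    ring
  rw [Finset.sum_range_succ' _ (p+1), Finset.sum_congr rfl h1, Finset.sum_add_distrib,
    Finset.mul_sum, Finset.sum_range_succ' (fun k => z * ((p.choose k : ℝ) * z^(p-k) * c (q+k))) p,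
    Finset.sum_range_succ (fun i => (p.choose (i+1) : ℝ) * z^(p-i) * c (q+1+i)) p]
  have h2 : ∀ i ∈ range p, z * ((p.choose (i+1) : ℝ) * z^(p-(i+1)) * c (q+(i+1)))
      = (p.choose (i+1) : ℝ) * z^(p-i) * c (q+1+i) := by
    intro i hi
    simp only [mem_range] at hi
    have hs : p - (i+1) + 1 = p - i := by omega
    have hq : q + 1 + i = q + (i + 1) := by omega
    rw [← hs, pow_succ, hq]
    ring
  rw [Finset.sum_congr rfl h2]
  simp [Nat.choose_succ_self]
  ring

private lemma comb_lemma' (a b : ℕ → ℝ) (y : ℝ)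
    (hb : ∀ p, b p = ∑ j ∈ range (p+1), (p.choose j : ℝ) * a j * y^(p-j)) :
    ∀ m n : ℕ, ∑ k ∈ range (n+1), (n.choose k : ℝ) * y^(n-k) * a (m+k)
      = ∑ k ∈ range (m+1), (m.choose k : ℝ) * (-y)^(m-k) * b (n+k) := by
  intro m
  induction m with
  | zero =>
    intro n
    simp [hb n]
    exact Finset.sum_congr rfl fun j hj => by ring
  | succ m ih =>
    intro n
    have hL := rec_lemma' a y n m
    have hR := rec_lemma' b (-y) m n
    calc ∑ k ∈ range (n+1), (n.choose k : ℝ) * y^(n-k) * a (m+1+k)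
        = (∑ k ∈ range (n+2), ((n+1).choose k : ℝ) * y^(n+1-k) * a (m+k))
          - y * ∑ k ∈ range (n+1), (n.choose k : ℝ) * y^(n-k) * a (m+k) := by rw [hL]; ring
      _ = (∑ k ∈ range (m+1), (m.choose k : ℝ) * (-y)^(m-k) * b (n+1+k))
          - y * ∑ k ∈ range (m+1), (m.choose k : ℝ) * (-y)^(m-k) * b (n+k) := by
            rw [ih (n+1), ih n]
      _ = ∑ k ∈ range (m+2), ((m+1).choose k : ℝ) * (-y)^(m+1-k) * b (n+k) := by
            rw [hR]; ring

private lemma appell_lemma' (lam mu : ℝ) (hden : lam + 1 - mu ≠ 0) (V : ℕ → ℝ → ℝ)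
    (hV : IsUnifiedApostolBE lam mu V) (x y : ℝ) (p : ℕ) :
    V p (x + y) = ∑ j ∈ Finset.range (p+1), (p.choose j : ℝ) * V j x * y^(p-j) := by
  set A := PowerSeries.C lam * PowerSeries.exp ℝ + PowerSeries.C (1 - mu) with hA
  have hA0 : PowerSeries.constantCoeff A = lam + 1 - mu := by
    simp [hA, PowerSeries.constantCoeff_exp]
    ring
  have hAne : A ≠ 0 := fun h => hden (by rw [← hA0, h, map_zero])
  have key : A * PowerSeries.mk (fun n => V n (x+y) / n.factorial)
      = A * (PowerSeries.mk (fun n => V n x / n.factorial) * PowerSeries.rescale y (PowerSeries.exp ℝ)) := by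
    rw [hV (x+y), ← mul_assoc, hV x, mul_assoc, PowerSeries.exp_mul_exp_eq_exp_add]
  have hF := mul_left_cancel₀ hAne key
  have hc := congrArg (PowerSeries.coeff p) hF
  rw [PowerSeries.coeff_mk, PowerSeries.coeff_mul] at hc
  rw [Finset.Nat.sum_antidiagonal_eq_sum_range_succ_mk] at hc
  simp only [PowerSeries.coeff_mk, PowerSeries.coeff_rescale, PowerSeries.coeff_exp] at hc
  have hp : (p.factorial : ℝ) ≠ 0 := Nat.cast_ne_zero.mpr p.factorial_ne_zero
  rw [div_eq_iff hp] at hc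
  rw [hc, Finset.sum_mul]
  refine Finset.sum_congr rfl fun j hj => ?_
  have hj' : j ≤ p := Nat.lt_succ_iff.mp (Finset.mem_range.mp hj)
  have hfac : ((p.choose j : ℝ)) * (j.factorial : ℝ) * ((p-j).factorial : ℝ) = (p.factorial : ℝ) := by
    exact_mod_cast congrArg (Nat.cast : ℕ → ℝ) (Nat.choose_mul_factorial_mul_factorial hj')
  have hjf : (j.factorial : ℝ) ≠ 0 := Nat.cast_ne_zero.mpr j.factorial_ne_zero
  have hpjf : ((p-j).factorial : ℝ) ≠ 0 := Nat.cast_ne_zero.mpr (p-j).factorial_ne_zero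
  simp only [map_div₀, map_one, map_natCast]
  field_simp
  linear_combination (-(V j x * y^(p-j))) * hfac

theorem unified_symmetry (lam mu : ℝ) (hlam : 0 < lam) (hmu : 0 ≤ mu) (hmu1 : mu ≠ 1)
    (hden : lam + 1 - mu ≠ 0) (V : ℕ → ℝ → ℝ) (hV : IsUnifiedApostolBE lam mu V)
    (n m : ℕ) (x y : ℝ) :
    ∑ k ∈ Finset.range (n + 1), (n.choose k : ℝ) * y ^ (n - k) * V (m + k) x =
      ∑ k ∈ Finset.range (m + 1), (m.choose k : ℝ) * (-y) ^ (m - k) * V (n + k) (x + y) := by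
  exact comb_lemma' (fun j => V j x) (fun p => V p (x + y)) y
    (fun p => appell_lemma' lam mu hden V hV x y p) m n
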